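/- arXiv:1805.09246 — 2 statements merged into one kernel-verified Lean document; each statement's English description precedes it below -/
import Mathlib

section
/- With the age-counter semantics, a cell value less than k holds if and only if some element hashed to that cell within the last k time slices. Hence the sliding weight |SRE|^k (number of cells with value < k) of the sliding estimator at the end of slice t + k − 1 equals the weight (number of set bits) that a discrete-window estimator would have after processing exactly the elements of slices t through t + k − 1. -/
/-- Age of a cell at the end of slice `T`, given the set `E` of slice times at which some
element hashed to this cell: `T − max E` if `E` is nonempty, `⊤` otherwise. -/
def cellVal (T : ℕ) (E : Finset ℕ) : ℕ∞ :=
  if h : E.Nonempty then ((T - E.max' h : ℕ) : ℕ∞) else ⊤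

-- `0 < k` covers the case `max E > T`, where the truncated age `T - max E` is `0`.
theorem cellVal_lt_iff {T k : ℕ} (hk : 0 < k) (E : Finset ℕ) :
    cellVal T E < k ↔ ∃ s ∈ E, T < s + k := by
  unfold cellVal
  split_ifs with hE
  · rw [Nat.cast_lt]
    constructor
    · intro hlt
      exact ⟨E.max' hE, E.max'_mem hE, by omega⟩
    · rintro ⟨s, hs, hlt⟩
      have := E.le_max' s hs
      omega
  · simp [Finset.not_nonempty_iff_eq_empty.mp hE]

/-- A cell value is `< k` at the end of slice `t+k−1` iff some element hashed to it during
slices `t,…,t+k−1`; hence the sliding weight `|SRE|^k` equals the discrete-window weight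
over window `W(t,k)`. -/
theorem stmt18 (η k t : ℕ) (hk : 1 ≤ k) (E : Fin η → Finset ℕ)
    (hE : ∀ j, ∀ s ∈ E j, s ≤ t + k - 1) :
    (∀ j, cellVal (t + k - 1) (E j) < (k : ℕ∞) ↔ ∃ s ∈ E j, t ≤ s ∧ s ≤ t + k - 1) ∧
    (Finset.univ.filter fun j => cellVal (t + k - 1) (E j) < (k : ℕ∞)).card
      = (Finset.univ.filter fun j : Fin η => ∃ s ∈ E j, t ≤ s ∧ s ≤ t + k - 1).card := by
  have hcell : ∀ j, cellVal (t + k - 1) (E j) < (k : ℕ∞) ↔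
      ∃ s ∈ E j, t ≤ s ∧ s ≤ t + k - 1 := fun j => by
    rw [cellVal_lt_iff hk]
    refine exists_congr fun s => and_congr_right fun hs => ?_
    have := hE j s hs
    omega
  exact ⟨hcell, congrArg Finset.card (Finset.filter_congr fun j _ => hcell j)⟩
end

section
/- Given independent sampling with probability p = 1/2^τ of N elements, followed by throwing each sampled element uniformly into η boxes, the probability that at least n boxes are non-empty is Σ_{η₁=n}^{η} Σ_{α=η₁}^{N} C(N,α) p^α (1−p)^{N−α} · C(η,η₁) FN(α,η₁)/η^α, and this probability is monotonically non-decreasing in N. -/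
/-!
Write a configuration `f : ι → γ × β` as a sampling pattern `a : ι → γ` together with box choices
`b : ι → β`. If the sampled set `S = {i | p (a i)}` has `α` elements, the box choices whose image on
`S` is a given `T` with `η₁` elements number `FN α η₁ · |β| ^ (N - α)` (a surjection `S → T` and
arbitrary values off `S`), and exactly `#p ^ α · #¬p ^ (N - α)` patterns have sampled set `S`.
Grouping the sets `S` and `T` by cardinality gives the binomial-times-occupancy formula.

For monotonicity, an `(N + 1)`-tuple whose first `N` entries already reach `n` non-empty boxes
still does, so the count for `N + 1` is at least `|γ × β|` times the count for `N`.
-/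

/-- `FN α η₁` is the number of surjections from an `α`-element set onto an
`η₁`-element set. -/
def FN (α η₁ : ℕ) : ℕ := Fintype.card {f : Fin α → Fin η₁ // Function.Surjective f}

open Finset Function

theorem FN_eq_zero_of_lt {α η₁ : ℕ} (h : α < η₁) : FN α η₁ = 0 := by
  rw [FN, Fintype.card_eq_zero_iff]
  exact ⟨fun ⟨g, hg⟩ => absurd (Fintype.card_le_of_surjective g hg) (by simpa using h)⟩

theorem sum_filter_le_card_apply_card {β M : Type*} [Fintype β] [AddCommMonoid M] (n : ℕ)
    (g : ℕ → M) :
    ∑ T : Finset β with n ≤ #T, g #T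
      = ∑ k ∈ Icc n (Fintype.card β), (Fintype.card β).choose k • g k := by
  rw [sum_filter, ← powerset_univ, sum_powerset_apply_card fun k => if n ≤ k then g k else 0,
    card_univ]
  simp only [smul_ite, smul_zero]
  rw [← sum_filter]
  congr 1
  ext k
  simp only [mem_filter, mem_range, mem_Icc]
  omega

section Counting

variable {α β : Type*} [Fintype α] [DecidableEq α] [Fintype β] [DecidableEq β]

omit [DecidableEq α] in
def imageUnivEqEquivSurjective (T : Finset β) :
    {g : α → β // univ.image g = T} ≃ {g : α → T // Surjective g} where
  toFun g := ⟨fun a => ⟨g.1 a, (Finset.ext_iff.1 g.2 _).1 (mem_image_of_mem g.1 (mem_univ a))⟩,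
    fun t => by
      obtain ⟨a, -, ha⟩ := mem_image.1 ((Finset.ext_iff.1 g.2 _).2 t.2)
      exact ⟨a, Subtype.ext ha⟩⟩
  invFun g := ⟨fun a => g.1 a, by
    ext b
    simp only [mem_image, mem_univ, true_and]
    exact ⟨fun ⟨a, ha⟩ => ha ▸ (g.1 a).2,
      fun hb => ⟨_, congrArg Subtype.val (g.2 ⟨b, hb⟩).choose_spec⟩⟩⟩
  left_inv _ := rfl
  right_inv _ := rfl

theorem card_filter_image_univ_eq (T : Finset β) :
    #{g : α → β | univ.image g = T} = FN (Fintype.card α) #T := by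
  rw [← Fintype.card_subtype, Fintype.card_congr (imageUnivEqEquivSurjective T), FN]
  refine Fintype.card_congr (Equiv.subtypeEquiv
    (Equiv.arrowCongr (Fintype.equivFin α) T.equivFin) fun g => ?_)
  simp [Equiv.arrowCongr]

theorem card_filter_image_eq (S : Finset α) (T : Finset β) :
    #{b : α → β | S.image b = T} = FN #S #T * Fintype.card β ^ (Fintype.card α - #S) := by
  have himage (b : α → β) : S.image b = univ.image fun i : S => b i := by
    ext; simp
  rw [← Fintype.card_subtype, Fintype.card_congr
    ((Equiv.piEquivPiSubtypeProd (· ∈ S) fun _ => β).subtypeEquiv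
      (p := fun b => S.image b = T) (q := fun x => univ.image x.1 = T)
      fun b => by rw [himage]; rfl),
    Fintype.card_congr (Equiv.prodSubtypeFstEquivSubtypeProd (p := fun g => univ.image g = T)),
    Fintype.card_prod, Fintype.card_subtype, card_filter_image_univ_eq, Fintype.card_fun,
    Fintype.card_coe, Fintype.card_subtype_compl, Fintype.card_coe]

theorem card_filter_le_card_image (S : Finset α) (n : ℕ) :
    #{b : α → β | n ≤ #(S.image b)}
      = ∑ k ∈ Icc n (Fintype.card β),
          (Fintype.card β).choose k * FN #S k * Fintype.card β ^ (Fintype.card α - #S) := by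
  rw [card_eq_sum_card_fiberwise (f := S.image) (t := {T | n ≤ #T}) fun b hb => by simpa using hb]
  calc ∑ T : Finset β with n ≤ #T, #{b ∈ ({b | n ≤ #(S.image b)} : Finset (α → β)) | S.image b = T}
      = ∑ T : Finset β with n ≤ #T, #{b : α → β | S.image b = T} := by
        refine sum_congr rfl fun T hT => congrArg card ?_
        ext b
        simp only [mem_filter, mem_univ, true_and, and_iff_right_iff_imp]
        rintro rfl
        simpa using hT
    _ = _ := by
        simp only [card_filter_image_eq]
        rw [sum_filter_le_card_apply_card n
          fun k => FN #S k * Fintype.card β ^ (Fintype.card α - #S)]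
        simp only [smul_eq_mul, mul_assoc]

omit [DecidableEq β] in
theorem card_filter_filter_apply_eq (p : β → Prop) [DecidablePred p] (S : Finset α) :
    #{a : α → β | ({i | p (a i)} : Finset α) = S}
      = #{x | p x} ^ #S * #{x | ¬ p x} ^ (Fintype.card α - #S) := by
  have hpi : ({a : α → β | ({i | p (a i)} : Finset α) = S} : Finset _)
      = Fintype.piFinset fun i =>
          if i ∈ S then ({x | p x} : Finset β) else ({x | ¬ p x} : Finset β) := by
    ext a
    simp only [mem_filter, mem_univ, true_and, Fintype.mem_piFinset, Finset.ext_iff]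
    refine forall_congr' fun i => ?_
    split_ifs with hi <;> simp [hi]
  simp only [hpi, Fintype.card_piFinset, apply_ite card, prod_ite, prod_const,
    filter_mem_eq_inter, univ_inter, filter_not, card_sdiff, card_univ, inter_univ]

end Counting

section Sampling

variable {ι γ β : Type*} [Fintype ι] [DecidableEq β] (p : γ → Prop) [DecidablePred p]

/-- The set `RE` of bits set by the rough estimator: the boxes hit by the sampled elements. -/
def sampledImage (f : ι → γ × β) : Finset β :=
  ({i | p (f i).1} : Finset ι).image fun i => (f i).2

theorem sampledImage_comp_subset {ι' : Type*} [Fintype ι'] (f : ι → γ × β) (e : ι' → ι) :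
    sampledImage p (f ∘ e) ⊆ sampledImage p f := by
  intro b
  simp only [sampledImage, mem_image, mem_filter, mem_univ, true_and, comp_apply]
  exact fun ⟨i, hi, hb⟩ => ⟨e i, hi, hb⟩

variable [DecidableEq ι] [Fintype γ]

omit [DecidableEq β] in
theorem sum_apply_card_filter_apply {M : Type*} [AddCommMonoid M] (g : ℕ → M) :
    ∑ a : ι → γ, g #{i | p (a i)}
      = ∑ k ∈ range (Fintype.card ι + 1),
          ((Fintype.card ι).choose k * #{x | p x} ^ k * #{x | ¬ p x} ^ (Fintype.card ι - k))
            • g k := by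
  rw [← sum_fiberwise univ (fun a : ι → γ => ({i | p (a i)} : Finset ι))]
  calc ∑ S : Finset ι, ∑ a : ι → γ with ({i | p (a i)} : Finset ι) = S, g #{i | p (a i)}
      = ∑ S : Finset ι, (#{x | p x} ^ #S * #{x | ¬ p x} ^ (Fintype.card ι - #S)) • g #S := by
        refine sum_congr rfl fun S _ => ?_
        rw [sum_congr rfl fun a ha => by rw [(mem_filter.1 ha).2], sum_const,
          card_filter_filter_apply_eq]
    _ = _ := by
        rw [← powerset_univ, sum_powerset_apply_card
          fun m => (#{x | p x} ^ m * #{x | ¬ p x} ^ (Fintype.card ι - m)) • g m, card_univ]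
        simp only [smul_smul, mul_assoc]

theorem card_filter_le_card_sampledImage [Fintype β] (n : ℕ) :
    #{f : ι → γ × β | n ≤ #(sampledImage p f)}
      = ∑ k ∈ Icc n (Fintype.card β), ∑ α ∈ Icc k (Fintype.card ι),
          (Fintype.card ι).choose α * #{x | p x} ^ α * #{x | ¬ p x} ^ (Fintype.card ι - α)
            * ((Fintype.card β).choose k * FN α k * Fintype.card β ^ (Fintype.card ι - α)) := by
  have hsplit : #{f : ι → γ × β | n ≤ #(sampledImage p f)}
      = ∑ a : ι → γ, #{b : ι → β | n ≤ #(({i | p (a i)} : Finset ι).image b)} := by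
    simp only [card_filter]
    rw [← (Equiv.arrowProdEquivProdArrow ι (fun _ => γ) (fun _ => β)).symm.sum_comp,
      Fintype.sum_prod_type]
    rfl
  simp only [hsplit, card_filter_le_card_image]
  rw [sum_comm]
  refine sum_congr rfl fun k hk => ?_
  rw [sum_apply_card_filter_apply p fun α =>
    (Fintype.card β).choose k * FN α k * Fintype.card β ^ (Fintype.card ι - α)]
  refine (sum_subset (fun α hα => ?_) fun α hα hα' => ?_).symm
  · simp only [mem_Icc, mem_range] at hα ⊢; omega
  · have : α < k := by simp only [mem_Icc, mem_range] at hα hα' ⊢; omega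
    simp [FN_eq_zero_of_lt this]

end Sampling

theorem monotone_card_filter_div_card_pow {K : Type*} [Field K] [LinearOrder K]
    [IsStrictOrderedRing K] {δ : Type*} [Fintype δ] [Nonempty δ] (P : ∀ N, (Fin N → δ) → Prop)
    [∀ N, DecidablePred (P N)] (hP : ∀ N (g : Fin (N + 1) → δ), P N (Fin.init g) → P (N + 1) g) :
    Monotone fun N => (#{f | P N f} : K) / (Fintype.card δ : K) ^ N := by
  refine monotone_nat_of_le_succ fun N => ?_
  have hinit : #{g : Fin (N + 1) → δ | P N (Fin.init g)} = Fintype.card δ * #{f | P N f} := by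
    rw [← card_univ, ← card_product]
    refine card_equiv (Fin.snocEquiv fun _ => δ).symm fun g => ?_
    simp
  have hle : (Fintype.card δ * #{f | P N f} : K) ≤ #{g | P (N + 1) g} := by
    exact_mod_cast hinit ▸ card_le_card (monotone_filter_right _ fun g _ => hP N g)
  rw [div_le_div_iff₀ (by positivity) (by positivity)]
  calc (#{f | P N f} : K) * Fintype.card δ ^ (N + 1)
      = (Fintype.card δ * #{f | P N f} : K) * Fintype.card δ ^ N := by ring
    _ ≤ #{g | P (N + 1) g} * Fintype.card δ ^ N := by gcongr

theorem div_pow_eq_sampling_term {K : Type*} [Field K] {N α : ℕ} (hα : α ≤ N)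
    (C B F c s e : K) (hs : s ≠ 0) (he : e ≠ 0) :
    C * c ^ α * (s - c) ^ (N - α) * (B * F * e ^ (N - α)) / (s * e) ^ N
      = C * (c / s) ^ α * (1 - c / s) ^ (N - α) * B * F / e ^ α := by
  obtain ⟨k, rfl⟩ := Nat.exists_eq_add_of_le hα
  rw [Nat.add_sub_cancel_left, one_sub_div hs, div_pow, div_pow, mul_pow, pow_add, pow_add]
  field_simp

theorem stmt19_general (τ η n : ℕ) (hη : 1 ≤ η) :
    (∀ N : ℕ,
      ((Finset.univ.filter (fun f : Fin N → Fin (2 ^ τ) × Fin η =>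
          n ≤ ((Finset.univ.filter (fun i => (f i).1.val = 0)).image
                (fun i => (f i).2)).card)).card : ℚ)
          / ((2 ^ τ * η : ℚ)) ^ N
      = ∑ η₁ ∈ Finset.Icc n η, ∑ α ∈ Finset.Icc η₁ N,
          (N.choose α : ℚ) * (1 / 2 ^ τ) ^ α * (1 - 1 / 2 ^ τ) ^ (N - α)
            * (η.choose η₁ : ℚ) * (FN α η₁ : ℚ) / (η : ℚ) ^ α) ∧
    (∀ N M : ℕ, N ≤ M →
      (∑ η₁ ∈ Finset.Icc n η, ∑ α ∈ Finset.Icc η₁ N,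
          (N.choose α : ℚ) * (1 / 2 ^ τ) ^ α * (1 - 1 / 2 ^ τ) ^ (N - α)
            * (η.choose η₁ : ℚ) * (FN α η₁ : ℚ) / (η : ℚ) ^ α)
      ≤ ∑ η₁ ∈ Finset.Icc n η, ∑ α ∈ Finset.Icc η₁ M,
          (M.choose α : ℚ) * (1 / 2 ^ τ) ^ α * (1 - 1 / 2 ^ τ) ^ (M - α)
            * (η.choose η₁ : ℚ) * (FN α η₁ : ℚ) / (η : ℚ) ^ α) := by
  have : NeZero η := ⟨by omega⟩
  let p : Fin (2 ^ τ) → Prop := fun x => x.val = 0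
  have hp : #{x | p x} = 1 := card_eq_one.2 ⟨⟨0, by positivity⟩, by
    ext x; simp only [mem_filter, mem_univ, true_and, mem_singleton, Fin.ext_iff, p]⟩
  have hnp : #{x | ¬ p x} = 2 ^ τ - 1 := by
    rw [filter_not, card_sdiff, inter_univ, hp, card_univ, Fintype.card_fin]
  have key (N : ℕ) : (#{f : Fin N → Fin (2 ^ τ) × Fin η | n ≤ #(sampledImage p f)} : ℚ)
      / (2 ^ τ * η : ℚ) ^ N = ∑ η₁ ∈ Icc n η, ∑ α ∈ Icc η₁ N,
          (N.choose α : ℚ) * (1 / 2 ^ τ) ^ α * (1 - 1 / 2 ^ τ) ^ (N - α)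
            * (η.choose η₁ : ℚ) * (FN α η₁ : ℚ) / (η : ℚ) ^ α := by
    rw [card_filter_le_card_sampledImage, hp, hnp]
    simp only [Fintype.card_fin, Nat.cast_sum, sum_div]
    refine sum_congr rfl fun η₁ _ => sum_congr rfl fun α hα => ?_
    push_cast [Nat.one_le_two_pow]
    exact div_pow_eq_sampling_term (mem_Icc.1 hα).2 _ _ _ _ _ _ (by positivity) (by positivity)
  refine ⟨key, fun N M hNM => ?_⟩
  rw [← key N, ← key M]
  simpa [Fintype.card_prod] using monotone_card_filter_div_card_pow (K := ℚ)
    (δ := Fin (2 ^ τ) × Fin η) (fun N f => n ≤ #(sampledImage p f))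
    (fun N g h => h.trans (card_le_card (sampledImage_comp_subset p g Fin.castSucc))) hNM

/-- Two-stage model: each of `N` elements independently passes an LSB filter with
probability `p = 1/2^τ` (its uniform `Fin (2^τ)` value equals 0) and, if sampled, sets a
uniformly random one of `η` boxes. The probability that at least `n` boxes are non-empty
equals `Σ_{η₁=n}^{η} Σ_{α=η₁}^{N} C(N,α) p^α (1−p)^{N−α} · C(η,η₁) FN(α,η₁)/η^α`, and
this probability is monotonically non-decreasing in `N`. -/
theorem stmt19 (τ η n : ℕ) (hη : 1 ≤ η) (hn : n ≤ η) :
    (∀ N : ℕ,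
      ((Finset.univ.filter (fun f : Fin N → Fin (2 ^ τ) × Fin η =>
          n ≤ ((Finset.univ.filter (fun i => (f i).1.val = 0)).image
                (fun i => (f i).2)).card)).card : ℚ)
          / ((2 ^ τ * η : ℚ)) ^ N
      = ∑ η₁ ∈ Finset.Icc n η, ∑ α ∈ Finset.Icc η₁ N,
          (N.choose α : ℚ) * (1 / 2 ^ τ) ^ α * (1 - 1 / 2 ^ τ) ^ (N - α)
            * (η.choose η₁ : ℚ) * (FN α η₁ : ℚ) / (η : ℚ) ^ α) ∧
    (∀ N M : ℕ, N ≤ M →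
      (∑ η₁ ∈ Finset.Icc n η, ∑ α ∈ Finset.Icc η₁ N,
          (N.choose α : ℚ) * (1 / 2 ^ τ) ^ α * (1 - 1 / 2 ^ τ) ^ (N - α)
            * (η.choose η₁ : ℚ) * (FN α η₁ : ℚ) / (η : ℚ) ^ α)
      ≤ ∑ η₁ ∈ Finset.Icc n η, ∑ α ∈ Finset.Icc η₁ M,
          (M.choose α : ℚ) * (1 / 2 ^ τ) ^ α * (1 - 1 / 2 ^ τ) ^ (M - α)
            * (η.choose η₁ : ℚ) * (FN α η₁ : ℚ) / (η : ℚ) ^ α) :=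
  stmt19_general τ η n hη
end
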